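/- arXiv:2003.07149 — 3 statements merged into one kernel-verified Lean document; each statement's English description precedes it below -/
import Mathlib

section
/- For any integer t ≥ 2, the toric ideal I_{G_t} of the graph G_t is generated by the binomials in G₁ ∪ G₂ ∪ G₃, where G₁ = { a_i b_j − a_j b_i : 1 ≤ i < j ≤ t }, G₂ = { a_i a_j f_1 f_3 e_2 − f_2 e_1 e_3 b_i b_j : 1 ≤ i < j ≤ t }, and G₃ = { a_i² f_1 f_3 e_2 − f_2 e_1 e_3 b_i² : 1 ≤ i ≤ t }. -/
open MvPolynomial

noncomputable section

namespace ToricPaper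

variable (K : Type) [Field K]

/-- The Hilbert function of `R/I`: dimension of the degree `j` part. -/
def hilb {σ : Type} (I : Ideal (MvPolynomial σ K)) (j : ℕ) : ℕ :=
  Module.finrank K (Submodule.map (Ideal.Quotient.mkₐ K I).toLinearMap
    (homogeneousSubmodule σ K j))

/-- The Hilbert series of `R/I` as a power series over `ℤ`. -/
def hilbertSeries {σ : Type} (I : Ideal (MvPolynomial σ K)) : PowerSeries ℤ :=
  PowerSeries.mk fun j => (hilb K I j : ℤ)

/-- `h` is the `h`-polynomial of `R/I`: `h(1) ≠ 0` and
`HS_{R/I}(x) = h(x)/(1-x)^{dim R/I}`. -/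
def IsHPolynomial {σ : Type} (I : Ideal (MvPolynomial σ K)) (h : Polynomial ℤ) : Prop :=
  Polynomial.eval 1 h ≠ 0 ∧
  ∃ d : ℕ, ringKrullDim (MvPolynomial σ K ⧸ I) = d ∧
    (h : PowerSeries ℤ) = hilbertSeries K I * (1 - PowerSeries.X) ^ d

/-- A homogeneous ideal: all homogeneous components of its elements belong to it. -/
def IsHomogeneousIdeal {σ : Type} (I : Ideal (MvPolynomial σ K)) : Prop :=
  ∀ f ∈ I, ∀ n : ℕ, homogeneousComponent n f ∈ I

/-- The module of `i`-chains of the Koszul complex of the variables with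
coefficients in `R/I`. -/
abbrev KChain {σ : Type} (I : Ideal (MvPolynomial σ K)) (i : ℕ) : Type :=
  {S : Finset σ // S.card = i} → (MvPolynomial σ K ⧸ I)

/-- The Koszul differential. -/
def kd {σ : Type} [Finite σ] (I : Ideal (MvPolynomial σ K)) (i : ℕ)
    (f : KChain K I i) : KChain K I (i - 1) :=
  letI := Fintype.ofFinite σ
  letI := Classical.decEq σ
  letI : LinearOrder σ := IsWellOrder.linearOrder WellOrderingRel
  fun T =>
    if hi : 1 ≤ i then
      ∑ x : σ,
        if hx : x ∈ T.1 then 0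
        else ((-1 : ℤ) ^ (T.1.filter (fun y => y < x)).card) •
          (Ideal.Quotient.mk I (X x) *
            f ⟨insert x T.1, by rw [Finset.card_insert_of_notMem hx, T.2]; omega⟩)
    else 0

/-- The internal degree `j` part of the `i`-chains of the Koszul complex:
each Koszul basis element `e_S`, `|S| = i`, has degree `i`, so coefficients
lie in the degree `j - i` part of `R/I`. -/
def degPart {σ : Type} (I : Ideal (MvPolynomial σ K)) (i j : ℕ) :
    Set (KChain K I i) :=
  {f | (∀ T, f T ∈ Submodule.map (Ideal.Quotient.mkₐ K I).toLinearMap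
          (homogeneousSubmodule σ K (j - i))) ∧ (i ≤ j ∨ f = 0)}

/-- Degree `j` Koszul cycles in homological degree `i`. -/
def cyclesSet {σ : Type} [Finite σ] (I : Ideal (MvPolynomial σ K)) (i j : ℕ) :
    Set (KChain K I i) :=
  degPart K I i j ∩ {f | kd K I i f = 0}

/-- Degree `j` Koszul boundaries in homological degree `i`. -/
def boundariesSet {σ : Type} [Finite σ] (I : Ideal (MvPolynomial σ K)) (i j : ℕ) :
    Set (KChain K I i) :=
  kd K I (i + 1) '' (degPart K I (i + 1) j)

/-- The graded Betti numbers `β_{i,j}(R/I) = dim_K Tor_i(R/I, K)_j`, computed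
as the dimension of the degree `j` part of the `i`-th homology of the Koszul
complex of the variables with coefficients in `R/I`. -/
def betti {σ : Type} [Finite σ] (I : Ideal (MvPolynomial σ K)) (i j : ℕ) : ℕ :=
  Module.finrank K
    ((Submodule.span K (cyclesSet K I i j)) ⧸
      (Submodule.comap (Submodule.span K (cyclesSet K I i j)).subtype
        (Submodule.span K (boundariesSet K I i j))))

/-- Castelnuovo-Mumford regularity: `max { j - i | β_{i,j}(R/I) ≠ 0 }`. -/
def regularity {σ : Type} [Finite σ] (I : Ideal (MvPolynomial σ K)) : ℕ :=
  sSup {r | ∃ i j, betti K I i j ≠ 0 ∧ j = i + r}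

/-- Projective dimension: `max { i | β_{i,j}(R/I) ≠ 0 for some j }`. -/
def pdim {σ : Type} [Finite σ] (I : Ideal (MvPolynomial σ K)) : ℕ :=
  sSup {p | ∃ j, betti K I p j ≠ 0}

/-- `β_{a,b}(R/I)` is an extremal graded Betti number. -/
def IsExtremalBetti {σ : Type} [Finite σ] (I : Ideal (MvPolynomial σ K))
    (a b : ℕ) : Prop :=
  betti K I a b ≠ 0 ∧
  ∀ i j : ℕ, a ≤ i → b < j → ((b : ℤ) - a ≤ (j : ℤ) - i) → betti K I i j = 0

/-- The depth of `R/I`: the maximal length of a regular sequence on `R/I`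
consisting of elements of the irrelevant maximal ideal `⟨x_1, …, x_n⟩`. -/
def depth {σ : Type} (I : Ideal (MvPolynomial σ K)) : ℕ :=
  sSup {n | ∃ rs : List (MvPolynomial σ K), rs.length = n ∧
    (∀ x ∈ rs, x ∈ Ideal.span (Set.range (X : σ → MvPolynomial σ K))) ∧
    RingTheory.Sequence.IsRegular (MvPolynomial σ K ⧸ I) rs}

/-- The initial ideal of `I` with respect to a monomial order: the ideal
generated by the leading monomials of the nonzero elements of `I`. -/
def initialIdeal {σ : Type} (m : MonomialOrder σ) (I : Ideal (MvPolynomial σ K)) :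
    Ideal (MvPolynomial σ K) :=
  Ideal.span {g | ∃ f ∈ I, f ≠ 0 ∧ ∃ u ∈ f.support,
    (∀ v ∈ f.support, m.toSyn v ≤ m.toSyn u) ∧ g = monomial u 1}

/-- The toric ideal of a finite simple graph `G`: the kernel of the map
`K[E] → K[V]` sending the variable of an edge `{u,v}` to `uv`. -/
def toricIdeal {V : Type} (G : SimpleGraph V) : Ideal (MvPolynomial G.edgeSet K) :=
  RingHom.ker (MvPolynomial.aeval (R := K)
    (fun e : G.edgeSet =>
      Sym2.lift ⟨fun u v => (X u : MvPolynomial V K) * X v,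
        fun _ _ => mul_comm _ _⟩ (e : Sym2 V))).toRingHom



/-! ### The graph `G_t` and its edge ring -/

/-- Edge variables of the graph `G_t`:
`a i = {x₁, y i}`, `f j` the triangle at `x₂`, `e j` the triangle at `x₁`,
`b i = {x₂, y i}`. -/
abbrev EVar (t : ℕ) : Type := (Fin t ⊕ Fin 3) ⊕ (Fin 3 ⊕ Fin t)

/-- The edge `a i = {x₁, y i}` of `G_t`. -/
def EVar.a {t : ℕ} (i : Fin t) : EVar t := Sum.inl (Sum.inl i)
/-- The edges `f 0 = f₁ = {x₂,w₁}`, `f 1 = f₂ = {w₁,w₂}`, `f 2 = f₃ = {w₂,x₂}`. -/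
def EVar.f {t : ℕ} (j : Fin 3) : EVar t := Sum.inl (Sum.inr j)
/-- The edges `e 0 = e₁ = {x₁,z₁}`, `e 1 = e₂ = {z₁,z₂}`, `e 2 = e₃ = {z₂,x₁}`. -/
def EVar.e {t : ℕ} (j : Fin 3) : EVar t := Sum.inr (Sum.inl j)
/-- The edge `b i = {x₂, y i}` of `G_t`. -/
def EVar.b {t : ℕ} (i : Fin t) : EVar t := Sum.inr (Sum.inr i)

/-- Vertices of `G_t`: `inl 0 = x₁`, `inl 1 = x₂`, `inl 2 = z₁`, `inl 3 = z₂`,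
`inl 4 = w₁`, `inl 5 = w₂`, and `inr i = y i`. -/
abbrev GtVertex (t : ℕ) : Type := Fin 6 ⊕ Fin t

/-- The map sending each edge variable of `G_t` to the product of the
variables of its two endpoints. -/
def gtMap (t : ℕ) : EVar t → MvPolynomial (GtVertex t) K
  | Sum.inl (Sum.inl i) => X (Sum.inl 0) * X (Sum.inr i)
  | Sum.inl (Sum.inr j) =>
      ![X (Sum.inl 1) * X (Sum.inl 4), X (Sum.inl 4) * X (Sum.inl 5),
        X (Sum.inl 5) * X (Sum.inl 1)] j
  | Sum.inr (Sum.inl j) =>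
      ![X (Sum.inl 0) * X (Sum.inl 2), X (Sum.inl 2) * X (Sum.inl 3),
        X (Sum.inl 3) * X (Sum.inl 0)] j
  | Sum.inr (Sum.inr i) => X (Sum.inl 1) * X (Sum.inr i)

/-- The toric ideal `I_{G_t} ⊆ K[E_t]`. -/
def toricGt (t : ℕ) : Ideal (MvPolynomial (EVar t) K) :=
  RingHom.ker (MvPolynomial.aeval (R := K) (gtMap K t)).toRingHom

/-- The rank of a variable in the order
`a₁ > ⋯ > a_t > f₁ > f₂ > f₃ > e₁ > e₂ > e₃ > b₁ > ⋯ > b_t`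
(smaller rank = larger variable). -/
def evarRank (t : ℕ) : EVar t → ℕ
  | Sum.inl (Sum.inl i) => (i : ℕ)
  | Sum.inl (Sum.inr j) => t + (j : ℕ)
  | Sum.inr (Sum.inl j) => t + 3 + (j : ℕ)
  | Sum.inr (Sum.inr i) => t + 6 + (i : ℕ)

/-- The graded reverse lexicographic comparison of exponent vectors for the
variable order `a₁ > ⋯ > a_t > f₁ > f₂ > f₃ > e₁ > e₂ > e₃ > b₁ > ⋯ > b_t`:
`u ≤ v` iff `deg u < deg v`, or the degrees agree and either `u = v` or
`u x > v x` at the smallest variable `x` (i.e. largest rank) where `u` and `v`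
differ. -/
def grevlexLe (t : ℕ) (u v : EVar t →₀ ℕ) : Prop :=
  (u.sum fun _ n => n) < (v.sum fun _ n => n) ∨
  ((u.sum fun _ n => n) = (v.sum fun _ n => n) ∧
    (u = v ∨ ∃ x, v x < u x ∧ ∀ y, evarRank t x < evarRank t y → u y = v y))

/-- `m` is the graded reverse lexicographic monomial order with
`a₁ > ⋯ > a_t > f₁ > f₂ > f₃ > e₁ > e₂ > e₃ > b₁ > ⋯ > b_t`. -/
def IsGrevlex (t : ℕ) (m : MonomialOrder (EVar t)) : Prop :=
  ∀ u v : EVar t →₀ ℕ, (m.toSyn u ≤ m.toSyn v) ↔ grevlexLe t u v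

/-- The binomials `a_i b_j - a_j b_i`, `1 ≤ i < j ≤ t`. -/
def G1Set (t : ℕ) : Set (MvPolynomial (EVar t) K) :=
  {g | ∃ i j : Fin t, i < j ∧
    g = X (EVar.a i) * X (EVar.b j) - X (EVar.a j) * X (EVar.b i)}

/-- The binomials `a_i a_j f₁ f₃ e₂ - f₂ e₁ e₃ b_i b_j`, `1 ≤ i < j ≤ t`. -/
def G2Set (t : ℕ) : Set (MvPolynomial (EVar t) K) :=
  {g | ∃ i j : Fin t, i < j ∧
    g = X (EVar.a i) * X (EVar.a j) * X (EVar.f 0) * X (EVar.f 2) * X (EVar.e 1)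
      - X (EVar.f 1) * X (EVar.e 0) * X (EVar.e 2) * X (EVar.b i) * X (EVar.b j)}

/-- The binomials `a_i² f₁ f₃ e₂ - f₂ e₁ e₃ b_i²`, `1 ≤ i ≤ t`. -/
def G3Set (t : ℕ) : Set (MvPolynomial (EVar t) K) :=
  {g | ∃ i : Fin t,
    g = X (EVar.a i) ^ 2 * X (EVar.f 0) * X (EVar.f 2) * X (EVar.e 1)
      - X (EVar.f 1) * X (EVar.e 0) * X (EVar.e 2) * X (EVar.b i) ^ 2}

/-- The monomials `a_i b_j`, `1 ≤ j < i ≤ t`. -/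
def M1Set (t : ℕ) : Set (MvPolynomial (EVar t) K) :=
  {g | ∃ i j : Fin t, j < i ∧ g = X (EVar.a i) * X (EVar.b j)}

/-- The monomials `a_i a_j f₁ f₃ e₂`, `1 ≤ i < j ≤ t`. -/
def M2Set (t : ℕ) : Set (MvPolynomial (EVar t) K) :=
  {g | ∃ i j : Fin t, i < j ∧
    g = X (EVar.a i) * X (EVar.a j) * X (EVar.f 0) * X (EVar.f 2) * X (EVar.e 1)}

/-- The monomials `a_i² f₁ f₃ e₂`, `1 ≤ i ≤ t`. -/
def M3Set (t : ℕ) : Set (MvPolynomial (EVar t) K) :=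
  {g | ∃ i : Fin t,
    g = X (EVar.a i) ^ 2 * X (EVar.f 0) * X (EVar.f 2) * X (EVar.e 1)}

end ToricPaper

/-!
The binomials of `𝒢₁ ∪ 𝒢₂ ∪ 𝒢₃` lie in `I_{G_t}`, and `I_{G_t}` is spanned by the binomials
`x^u - x^v` whose exponents have the same vertex-degree vector. Modulo the ideal `J` they generate,
every monomial reduces to a standard one (divisible by no `a_i b_j` with `j < i`, no
`a_i a_j f₁ f₃ e₂` and no `a_i² f₁ f₃ e₂`), each step lowering `∑ (i + 1) deg_{a_i}`. A standard
monomial is determined by its degree vector: the two triangles force the exponent of `e₂`, hence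
those of all triangle edges and the total `a`-degree, and then the exponents of the `a_i`, `b_i`
form a staircase fixed by the degrees of the `y_i`. So two monomials with the same degree vector
are congruent modulo `J`.
-/

namespace MvPolynomial

variable {R σ τ : Type*} [CommRing R]

theorem aeval_monomial_eq_monomial_weight (w : σ → τ →₀ ℕ) (u : σ →₀ ℕ) (c : R) :
    aeval (fun x => monomial (w x) (1 : R)) (monomial u c) =
      monomial (Finsupp.weight w u) c := by
  simp only [aeval_monomial, monomial_pow, one_pow, Finsupp.weight_apply,
    monomial_finsupp_sum_index, algebraMap_eq]

theorem monomial_one_sub_mem_ker_iff [Nontrivial R] (w : σ → τ →₀ ℕ) (u v : σ →₀ ℕ) :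
    monomial u (1 : R) - monomial v 1 ∈ RingHom.ker (aeval fun x => monomial (w x) (1 : R)) ↔
      Finsupp.weight w u = Finsupp.weight w v := by
  rw [RingHom.mem_ker, map_sub, sub_eq_zero, aeval_monomial_eq_monomial_weight,
    aeval_monomial_eq_monomial_weight, (monomial_left_injective one_ne_zero).eq_iff]

theorem ker_aeval_monomial_le (w : σ → τ →₀ ℕ) (I : Ideal (MvPolynomial σ R))
    (hI : ∀ u v, Finsupp.weight w u = Finsupp.weight w v →
      monomial u (1 : R) - monomial v 1 ∈ I) :
    RingHom.ker (aeval fun x => monomial (w x) (1 : R)) ≤ I := by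
  let Φ : (σ →₀ ℕ) →+ τ →₀ ℕ := Finsupp.weight w
  -- `lift` sends the monomial `m` to `x^u` for a chosen `u` with `Φ u = m`; every `f` is
  -- congruent modulo `I` to `lift (aeval f)`, which vanishes on the kernel.
  let lift : MvPolynomial τ R →ₗ[R] MvPolynomial σ R :=
    AddMonoidAlgebra.mapDomainLinearMap R R (Function.invFun Φ)
  have lift_monomial (m : τ →₀ ℕ) (c : R) :
      lift (monomial m c) = monomial (Function.invFun Φ m) c :=
    AddMonoidAlgebra.mapDomainLinearMap_single _ _ _
  have key : ∀ f, f - lift (aeval (fun x => monomial (w x) (1 : R)) f) ∈ I := by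
    intro f
    induction f using MvPolynomial.induction_on' with
    | monomial u c =>
      have hu : Φ (Function.invFun Φ (Φ u)) = Φ u := Function.invFun_eq ⟨u, rfl⟩
      rw [aeval_monomial_eq_monomial_weight, lift_monomial, ← mul_one c, ← smul_eq_mul,
        ← smul_monomial, ← smul_monomial, ← smul_sub]
      exact Submodule.smul_of_tower_mem _ c (hI _ _ hu.symm)
    | add p q hp hq =>
      rw [map_add, map_add, add_sub_add_comm]
      exact add_mem hp hq
  intro f hf
  simpa only [RingHom.mem_ker.mp hf, map_zero, sub_zero] using key f

theorem exists_monomial_one_sub_tsub_add_mem_of_le {J : Ideal (MvPolynomial σ R)}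
    (ρ : σ → ℕ) {u p q : σ →₀ ℕ} (hpu : p ≤ u) (hpq : monomial p (1 : R) - monomial q 1 ∈ J)
    (hρ : Finsupp.weight ρ q < Finsupp.weight ρ p) :
    ∃ v, monomial u (1 : R) - monomial v 1 ∈ J ∧ Finsupp.weight ρ v < Finsupp.weight ρ u := by
  refine ⟨u - p + q, ?_, ?_⟩
  · have h : monomial u (1 : R) - monomial (u - p + q) 1 =
        monomial (u - p) 1 * (monomial p 1 - monomial q 1) := by
      rw [mul_sub, monomial_mul, monomial_mul, mul_one, tsub_add_cancel_of_le hpu]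
    rw [h]
    exact J.mul_mem_left _ hpq
  · have hu : Finsupp.weight ρ u = Finsupp.weight ρ (u - p) + Finsupp.weight ρ p := by
      rw [← map_add, tsub_add_cancel_of_le hpu]
    rw [map_add, hu]
    omega

theorem exists_normal_monomial_one_sub_mem (J : Ideal (MvPolynomial σ R))
    (N : (σ →₀ ℕ) → Prop) (μ : (σ →₀ ℕ) → ℕ)
    (reduce : ∀ u, ¬ N u → ∃ v, monomial u (1 : R) - monomial v 1 ∈ J ∧ μ v < μ u)
    (u : σ →₀ ℕ) : ∃ n, N n ∧ monomial u (1 : R) - monomial n 1 ∈ J := by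
  induction u using (measure μ).wf.induction with
  | _ u ih =>
    by_cases hu : N u
    · exact ⟨u, hu, by rw [sub_self]; exact J.zero_mem⟩
    · obtain ⟨v, huv, hμ⟩ := reduce u hu
      obtain ⟨n, hn, hvn⟩ := ih v hμ
      exact ⟨n, hn, by simpa only [sub_add_sub_cancel] using add_mem huv hvn⟩

theorem ker_aeval_monomial_eq_of_reduction [Nontrivial R] (w : σ → τ →₀ ℕ)
    (J : Ideal (MvPolynomial σ R)) (hJ : J ≤ RingHom.ker (aeval fun x => monomial (w x) (1 : R)))
    (N : (σ →₀ ℕ) → Prop) (hN : Set.InjOn (Finsupp.weight w) {u | N u}) (μ : (σ →₀ ℕ) → ℕ)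
    (reduce : ∀ u, ¬ N u → ∃ v, monomial u (1 : R) - monomial v 1 ∈ J ∧ μ v < μ u) :
    RingHom.ker (aeval fun x => monomial (w x) (1 : R)) = J := by
  refine le_antisymm (ker_aeval_monomial_le w J fun u v huv => ?_) hJ
  obtain ⟨n, hn, hun⟩ := exists_normal_monomial_one_sub_mem J N μ reduce u
  obtain ⟨n', hn', hvn'⟩ := exists_normal_monomial_one_sub_mem J N μ reduce v
  have hnn' : n = n' := hN hn hn' <| by
    rw [← (monomial_one_sub_mem_ker_iff w u n).mp (hJ hun), huv,
      (monomial_one_sub_mem_ker_iff w v n').mp (hJ hvn')]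
  subst hnn'
  simpa only [sub_sub_sub_cancel_right] using sub_mem hun hvn'

end MvPolynomial

theorem staircase_le {ι : Type*} [LinearOrder ι] [Fintype ι] {a b a' b' : ι → ℕ}
    (hab : ∀ i, a i + b i = a' i + b' i) (hsum : ∑ i, a i = ∑ i, a' i)
    (h : ∀ i j, j < i → a i = 0 ∨ b j = 0) (h' : ∀ i j, j < i → a' i = 0 ∨ b' j = 0)
    (i : ι) : a i ≤ a' i := by
  by_contra! hi
  obtain ⟨j, -, hj⟩ : ∃ j ∈ Finset.univ, a j < a' j := by
    by_contra! hle
    have := Finset.sum_lt_sum hle ⟨i, Finset.mem_univ i, hi⟩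
    omega
  have hi' := hab i
  have hj' := hab j
  rcases lt_trichotomy i j with hij | rfl | hji
  · rcases h' j i hij with h0 | h0 <;> omega
  · omega
  · rcases h i j hji with h0 | h0 <;> omega

theorem staircase_eq {ι : Type*} [LinearOrder ι] [Fintype ι] {a b a' b' : ι → ℕ}
    (hab : ∀ i, a i + b i = a' i + b' i) (hsum : ∑ i, a i = ∑ i, a' i)
    (h : ∀ i j, j < i → a i = 0 ∨ b j = 0) (h' : ∀ i j, j < i → a' i = 0 ∨ b' j = 0) :
    a = a' :=
  funext fun i => le_antisymm (staircase_le hab hsum h h' i)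
    (staircase_le (fun i => (hab i).symm) hsum.symm h' h i)

theorem exists_two_le_or_two_pos {ι : Type*} [LinearOrder ι] [Fintype ι] (f : ι → ℕ)
    (h : 2 ≤ ∑ i, f i) : (∃ i, 2 ≤ f i) ∨ ∃ i j, i < j ∧ 0 < f i ∧ 0 < f j := by
  by_contra! hc
  obtain ⟨i, -, hi⟩ := Finset.exists_ne_zero_of_sum_ne_zero (by omega : ∑ i, f i ≠ 0)
  rw [Finset.sum_eq_single i (fun j _ hji => ?_) (by simp)] at h
  · have := hc.1 i
    omega
  · rcases lt_or_gt_of_ne hji with hlt | hgt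
    · have := hc.2 j i hlt
      omega
    · have := hc.2 i j hgt
      omega

namespace ToricPaper

variable {t : ℕ}

def incidence : EVar t → GtVertex t →₀ ℕ
  | Sum.inl (Sum.inl i) => Finsupp.single (Sum.inl 0) 1 + Finsupp.single (Sum.inr i) 1
  | Sum.inl (Sum.inr j) =>
      ![Finsupp.single (Sum.inl 1) 1 + Finsupp.single (Sum.inl 4) 1,
        Finsupp.single (Sum.inl 4) 1 + Finsupp.single (Sum.inl 5) 1,
        Finsupp.single (Sum.inl 5) 1 + Finsupp.single (Sum.inl 1) 1] j
  | Sum.inr (Sum.inl j) =>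
      ![Finsupp.single (Sum.inl 0) 1 + Finsupp.single (Sum.inl 2) 1,
        Finsupp.single (Sum.inl 2) 1 + Finsupp.single (Sum.inl 3) 1,
        Finsupp.single (Sum.inl 3) 1 + Finsupp.single (Sum.inl 0) 1] j
  | Sum.inr (Sum.inr i) => Finsupp.single (Sum.inl 1) 1 + Finsupp.single (Sum.inr i) 1

theorem span_le_toricGt (K : Type) [Field K] (t : ℕ) :
    Ideal.span (G1Set K t ∪ G2Set K t ∪ G3Set K t) ≤ toricGt K t := by
  rw [Ideal.span_le]
  rintro g ((⟨i, j, -, rfl⟩ | ⟨i, j, -, rfl⟩) | ⟨i, rfl⟩) <;>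
  · simp only [SetLike.mem_coe, toricGt, RingHom.mem_ker, AlgHom.toRingHom_eq_coe,
      RingHom.coe_coe, map_sub, map_mul, map_pow, aeval_X, gtMap, EVar.a, EVar.b, EVar.e, EVar.f,
      Matrix.cons_val_zero, Matrix.cons_val_one, Matrix.cons_val_two, Matrix.head_cons,
      Matrix.tail_cons]
    ring

theorem gtMap_eq_monomial (K : Type) [Field K] (t : ℕ) :
    gtMap K t = fun x => monomial (incidence x) (1 : K) := by
  funext x
  rcases x with (i | j) | (j | i)
  · simp [gtMap, incidence, X, monomial_mul]
  · fin_cases j <;> simp [gtMap, incidence, X, monomial_mul]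
  · fin_cases j <;> simp [gtMap, incidence, X, monomial_mul]
  · simp [gtMap, incidence, X, monomial_mul]

theorem toricGt_eq_ker (K : Type) [Field K] (t : ℕ) :
    toricGt K t = RingHom.ker (aeval fun x => monomial (incidence x) (1 : K)) := by
  rw [toricGt, gtMap_eq_monomial]
  rfl

def aDegree (u : EVar t →₀ ℕ) : ℕ := ∑ i, u (EVar.a i)

def bDegree (u : EVar t →₀ ℕ) : ℕ := ∑ i, u (EVar.b i)

theorem weight_incidence_apply (u : EVar t →₀ ℕ) (v : GtVertex t) :
    Finsupp.weight incidence u v = ∑ x, u x * incidence x v := by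
  simp [Finsupp.weight_eq_sum]

theorem weight_incidence_x₁ (u : EVar t →₀ ℕ) :
    Finsupp.weight incidence u (Sum.inl 0) = aDegree u + u (EVar.e 0) + u (EVar.e 2) := by
  simp [weight_incidence_apply, Fintype.sum_sum_type, Fin.sum_univ_three, incidence, aDegree,
    EVar.a, EVar.e, add_assoc]

theorem weight_incidence_x₂ (u : EVar t →₀ ℕ) :
    Finsupp.weight incidence u (Sum.inl 1) = bDegree u + u (EVar.f 0) + u (EVar.f 2) := by
  simp [weight_incidence_apply, Fintype.sum_sum_type, Fin.sum_univ_three, incidence, bDegree,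
    EVar.b, EVar.f, add_comm, add_left_comm, add_assoc]

theorem weight_incidence_z₁ (u : EVar t →₀ ℕ) :
    Finsupp.weight incidence u (Sum.inl 2) = u (EVar.e 0) + u (EVar.e 1) := by
  simp [weight_incidence_apply, Fintype.sum_sum_type, Fin.sum_univ_three, incidence, EVar.e]

theorem weight_incidence_z₂ (u : EVar t →₀ ℕ) :
    Finsupp.weight incidence u (Sum.inl 3) = u (EVar.e 1) + u (EVar.e 2) := by
  simp [weight_incidence_apply, Fintype.sum_sum_type, Fin.sum_univ_three, incidence, EVar.e]

theorem weight_incidence_w₁ (u : EVar t →₀ ℕ) :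
    Finsupp.weight incidence u (Sum.inl 4) = u (EVar.f 0) + u (EVar.f 1) := by
  simp [weight_incidence_apply, Fintype.sum_sum_type, Fin.sum_univ_three, incidence, EVar.f]

theorem weight_incidence_w₂ (u : EVar t →₀ ℕ) :
    Finsupp.weight incidence u (Sum.inl 5) = u (EVar.f 1) + u (EVar.f 2) := by
  simp [weight_incidence_apply, Fintype.sum_sum_type, Fin.sum_univ_three, incidence, EVar.f]

theorem weight_incidence_y (u : EVar t →₀ ℕ) (i : Fin t) :
    Finsupp.weight incidence u (Sum.inr i) = u (EVar.a i) + u (EVar.b i) := by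
  simp [weight_incidence_apply, Fintype.sum_sum_type, Fin.sum_univ_three, incidence,
    Finsupp.single_apply, EVar.a, EVar.b]

/-- Exponents of the monomials divisible by no leading term `a_i b_j` (`j < i`),
`a_i a_j f₁ f₃ e₂` or `a_i² f₁ f₃ e₂` of the binomials `𝒢₁ ∪ 𝒢₂ ∪ 𝒢₃`. -/
def IsStandard (u : EVar t →₀ ℕ) : Prop :=
  (∀ i j : Fin t, j < i → u (EVar.a i) = 0 ∨ u (EVar.b j) = 0) ∧
  (0 < u (EVar.f 0) → 0 < u (EVar.f 2) → 0 < u (EVar.e 1) → aDegree u ≤ 1)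

theorem injOn_weight_incidence :
    Set.InjOn (Finsupp.weight incidence) {u : EVar t →₀ ℕ | IsStandard u} := by
  intro u hu v hv h
  have hy (i : Fin t) : u (EVar.a i) + u (EVar.b i) = v (EVar.a i) + v (EVar.b i) := by
    simpa only [weight_incidence_y] using DFunLike.congr_fun h (Sum.inr i)
  have hx₁ :
      aDegree u + u (EVar.e 0) + u (EVar.e 2) = aDegree v + v (EVar.e 0) + v (EVar.e 2) := by
    simpa only [weight_incidence_x₁] using DFunLike.congr_fun h (Sum.inl 0)
  have hx₂ :
      bDegree u + u (EVar.f 0) + u (EVar.f 2) = bDegree v + v (EVar.f 0) + v (EVar.f 2) := by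
    simpa only [weight_incidence_x₂] using DFunLike.congr_fun h (Sum.inl 1)
  have hz₁ : u (EVar.e 0) + u (EVar.e 1) = v (EVar.e 0) + v (EVar.e 1) := by
    simpa only [weight_incidence_z₁] using DFunLike.congr_fun h (Sum.inl 2)
  have hz₂ : u (EVar.e 1) + u (EVar.e 2) = v (EVar.e 1) + v (EVar.e 2) := by
    simpa only [weight_incidence_z₂] using DFunLike.congr_fun h (Sum.inl 3)
  have hw₁ : u (EVar.f 0) + u (EVar.f 1) = v (EVar.f 0) + v (EVar.f 1) := by
    simpa only [weight_incidence_w₁] using DFunLike.congr_fun h (Sum.inl 4)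
  have hw₂ : u (EVar.f 1) + u (EVar.f 2) = v (EVar.f 1) + v (EVar.f 2) := by
    simpa only [weight_incidence_w₂] using DFunLike.congr_fun h (Sum.inl 5)
  have hab : aDegree u + bDegree u = aDegree v + bDegree v := by
    simp only [aDegree, bDegree, ← Finset.sum_add_distrib, hy]
  -- If `e₂` differed, one side would have `e₂, f₁, f₃ > 0` and `aDegree ≥ 2`.
  have he₁ : u (EVar.e 1) = v (EVar.e 1) := by
    rcases lt_trichotomy (u (EVar.e 1)) (v (EVar.e 1)) with hlt | heq | hgt
    · have := hv.2 (by omega) (by omega) (by omega)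
      omega
    · exact heq
    · have := hu.2 (by omega) (by omega) (by omega)
      omega
  have ha : (fun i => u (EVar.a i)) = fun i => v (EVar.a i) :=
    staircase_eq hy (by simp only [aDegree] at hx₁ ⊢; omega) hu.1 hv.1
  ext x
  rcases x with (i | j) | (j | i)
  · exact congrFun ha i
  · change u (EVar.f j) = v (EVar.f j)
    fin_cases j <;> simp only [Fin.zero_eta, Fin.mk_one, Fin.reduceFinMk] <;> omega
  · change u (EVar.e j) = v (EVar.e j)
    fin_cases j <;> simp only [Fin.zero_eta, Fin.mk_one, Fin.reduceFinMk] <;> omega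
  · have := hy i
    have := congrFun ha i
    change u (EVar.b i) = v (EVar.b i)
    omega

-- A `𝒢₁`-move `a_i b_j ↦ a_j b_i` (`j < i`) lowers `Finsupp.weight aWeight` by `i - j`;
-- `𝒢₂`- and `𝒢₃`-moves remove two `a`'s.
def aWeight : EVar t → ℕ
  | Sum.inl (Sum.inl i) => i + 1
  | _ => 0

theorem exists_reduction (K : Type) [Field K] {u : EVar t →₀ ℕ} (hu : ¬ IsStandard u) :
    ∃ v, monomial u (1 : K) - monomial v 1 ∈ Ideal.span (G1Set K t ∪ G2Set K t ∪ G3Set K t) ∧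
      Finsupp.weight aWeight v < Finsupp.weight aWeight u := by
  simp only [IsStandard, not_and_or, not_forall, not_or, not_le, ← pos_iff_ne_zero] at hu
  rcases hu with ⟨i, j, hji, hi, hj⟩ | ⟨hf₀, hf₂, he₁, ha⟩
  · refine exists_monomial_one_sub_tsub_add_mem_of_le aWeight
      (p := .single (EVar.a i) 1 + .single (EVar.b j) 1)
      (q := .single (EVar.a j) 1 + .single (EVar.b i) 1) ?_ ?_ ?_
    · intro x
      simp only [Finsupp.add_apply, Finsupp.single_apply]
      split_ifs <;> subst_vars <;> simp_all [EVar.a, EVar.b] <;> omega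
    · rw [← neg_sub, Ideal.neg_mem_iff]
      refine Ideal.subset_span (Or.inl (Or.inl ⟨j, i, hji, ?_⟩))
      simp only [monomial_add_single, ← X_pow_eq_monomial, pow_one]
    · simp [Finsupp.weight_single, aWeight, EVar.a, EVar.b, hji]
  · rcases exists_two_le_or_two_pos _ ha with ⟨i, hi⟩ | ⟨i, j, hij, hi, hj⟩
    · refine exists_monomial_one_sub_tsub_add_mem_of_le aWeight
        (p := .single (EVar.a i) 2 + .single (EVar.f 0) 1 + .single (EVar.f 2) 1 +
          .single (EVar.e 1) 1)
        (q := .single (EVar.f 1) 1 + .single (EVar.e 0) 1 + .single (EVar.e 2) 1 +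
          .single (EVar.b i) 2) ?_ ?_ ?_
      · intro x
        simp only [Finsupp.add_apply, Finsupp.single_apply]
        split_ifs <;> subst_vars <;> simp_all [EVar.a, EVar.f, EVar.e] <;> omega
      · refine Ideal.subset_span (Or.inr ⟨i, ?_⟩)
        simp only [monomial_add_single, ← X_pow_eq_monomial, pow_one]
      · simp [Finsupp.weight_single, aWeight, EVar.a, EVar.b, EVar.e, EVar.f]
    · refine exists_monomial_one_sub_tsub_add_mem_of_le aWeight
        (p := .single (EVar.a i) 1 + .single (EVar.a j) 1 + .single (EVar.f 0) 1 +
          .single (EVar.f 2) 1 + .single (EVar.e 1) 1)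
        (q := .single (EVar.f 1) 1 + .single (EVar.e 0) 1 + .single (EVar.e 2) 1 +
          .single (EVar.b i) 1 + .single (EVar.b j) 1) ?_ ?_ ?_
      · intro x
        simp only [Finsupp.add_apply, Finsupp.single_apply]
        split_ifs <;> subst_vars <;> simp_all [EVar.a, EVar.f, EVar.e] <;> omega
      · refine Ideal.subset_span (Or.inl (Or.inr ⟨i, j, hij, ?_⟩))
        simp only [monomial_add_single, ← X_pow_eq_monomial, pow_one]
      · simp [Finsupp.weight_single, aWeight, EVar.a, EVar.b, EVar.e, EVar.f]

theorem statement7_general (K : Type) [Field K] (t : ℕ) :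
    toricGt K t = Ideal.span (G1Set K t ∪ G2Set K t ∪ G3Set K t) := by
  have hspan := span_le_toricGt K t
  rw [toricGt_eq_ker] at hspan ⊢
  exact ker_aeval_monomial_eq_of_reduction incidence _ hspan IsStandard injOn_weight_incidence
    (Finsupp.weight aWeight) fun u hu => exists_reduction K hu

/-- Theorem 3.5. For `t ≥ 2`, the toric ideal `I_{G_t}` is
generated by `𝒢₁ ∪ 𝒢₂ ∪ 𝒢₃`, where `𝒢₁ = {a_i b_j - a_j b_i : i < j}`,
`𝒢₂ = {a_i a_j f₁ f₃ e₂ - f₂ e₁ e₃ b_i b_j : i < j}` and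
`𝒢₃ = {a_i² f₁ f₃ e₂ - f₂ e₁ e₃ b_i² : 1 ≤ i ≤ t}`. -/
theorem statement7 (K : Type) [Field K] (t : ℕ) (ht : 2 ≤ t) :
    toricGt K t = Ideal.span (G1Set K t ∪ G2Set K t ∪ G3Set K t) :=
  statement7_general K t

end ToricPaper
end
end

section
/- For any integer t ≥ 2, with respect to the graded reverse lexicographic order on K[E_t] with a_1 > ⋯ > a_t > f_1 > f_2 > f_3 > e_1 > e_2 > e_3 > b_1 > ⋯ > b_t, the initial ideal of I_{G_t} is in(I_{G_t}) = ⟨ a_i b_j : 1 ≤ j < i ≤ t ⟩ + ⟨ a_i a_j f_1 f_3 e_2 : 1 ≤ i < j ≤ t ⟩ + ⟨ a_i² f_1 f_3 e_2 : 1 ≤ i ≤ t ⟩, and these t² monomials form a minimal generating set of in(I_{G_t}). -/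
open MvPolynomial

noncomputable section

namespace ToricPaper

variable (K : Type) [Field K]

/-!
`I_{G_t}` is the kernel of the monomial map `X e ↦ X^{φ e}`, where `φ e` is the incidence vector
of the edge `e`, so `x^u` is a leading monomial of `I_{G_t}` exactly when some exponent `w ≠ u`
with the same vertex degrees is grevlex-smaller than `u`. The smallest variable at which `u` and
`w` differ must be some `b_i`: once all `b`-exponents agree, the vertex equations force `w = u`.
If `w` has fewer `b_j` than `u` for some `j < i`, then `a_i b_j ∣ x^u`. Otherwise `w` has more
`b`'s in total than `u`, and the equations at `x₂, w₁, w₂` and at `x₁, z₁, z₂` force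
`f₁ f₃ e₂ ∣ x^u`, together with two factors `a_i a_j`. Conversely `a_i b_j` and
`a_i a_j f₁ f₃ e₂` lead the binomials `a_i b_j - a_j b_i` and `a_i a_j f₁ f₃ e₂ - f₂ e₁ e₃ b_i b_j`.
The `t²` generators form an antichain for divisibility: equal-degree ones are
comparable only when equal, and `a_i b_j` divides no generator of degree 5, since those have no `b`.
-/

open Finsupp

section MonomialMap

variable {σ τ : Type}

def kerMonomialMap (φ : σ → τ →₀ ℕ) : Ideal (MvPolynomial σ K) :=
  RingHom.ker (aeval (R := K) fun e => (monomial (φ e) 1 : MvPolynomial τ K)).toRingHom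

variable {K}

lemma aeval_monomial_monomial (φ : σ → τ →₀ ℕ) (u : σ →₀ ℕ) (c : K) :
    aeval (fun e => (monomial (φ e) 1 : MvPolynomial τ K)) (monomial u c) =
      monomial (linearCombination ℕ φ u) c := by
  rw [aeval_monomial, linearCombination_apply, monomial_finsupp_sum_index, algebraMap_eq]
  simp only [monomial_pow, one_pow]

lemma monomial_sub_monomial_mem_kerMonomialMap {φ : σ → τ →₀ ℕ} {u w : σ →₀ ℕ}
    (h : linearCombination ℕ φ u = linearCombination ℕ φ w) :
    monomial u (1 : K) - monomial w 1 ∈ kerMonomialMap K φ := by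
  rw [kerMonomialMap, RingHom.mem_ker, AlgHom.toRingHom_eq_coe, RingHom.coe_coe, map_sub,
    aeval_monomial_monomial, aeval_monomial_monomial, h, sub_self]

lemma exists_mem_support_ne_of_mem_kerMonomialMap {φ : σ → τ →₀ ℕ} {f : MvPolynomial σ K}
    (hf : f ∈ kerMonomialMap K φ) {u : σ →₀ ℕ} (hu : u ∈ f.support) :
    ∃ w ∈ f.support, w ≠ u ∧ linearCombination ℕ φ w = linearCombination ℕ φ u := by
  classical
  by_contra! hcon
  have hf0 : aeval (fun e => (monomial (φ e) 1 : MvPolynomial τ K)) f = 0 := hf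
  rw [f.as_sum, map_sum] at hf0
  have := congrArg (coeff (linearCombination ℕ φ u)) hf0
  simp only [aeval_monomial_monomial, coeff_sum, coeff_monomial, coeff_zero] at this
  rw [Finset.sum_eq_single u (fun w hw hwu => if_neg (hcon w hw hwu)) (absurd hu), if_pos rfl]
    at this
  exact MvPolynomial.mem_support_iff.mp hu this

lemma monomial_mem_initialIdeal_kerMonomialMap (m : MonomialOrder σ) {φ : σ → τ →₀ ℕ}
    {u w : σ →₀ ℕ} (hne : w ≠ u) (hφ : linearCombination ℕ φ w = linearCombination ℕ φ u)
    (hle : m.toSyn w ≤ m.toSyn u) :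
    monomial u (1 : K) ∈ initialIdeal K m (kerMonomialMap K φ) := by
  classical
  have hcoeff : coeff u (monomial u (1 : K) - monomial w 1) = 1 := by
    simp [coeff_monomial, hne]
  refine Ideal.subset_span ⟨_, monomial_sub_monomial_mem_kerMonomialMap hφ.symm, ?_, u,
    by simp [MvPolynomial.mem_support_iff, hcoeff], fun v hv => ?_, rfl⟩
  · rintro h
    simp [h] at hcoeff
  · have : v = u ∨ v = w := by
      simpa [support_monomial] using support_sub σ _ _ hv
    rcases this with rfl | rfl
    exacts [le_rfl, hle]

theorem initialIdeal_kerMonomialMap_eq_span (m : MonomialOrder σ) {φ : σ → τ →₀ ℕ}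
    {S : Set (σ →₀ ℕ)}
    (hS : ∀ s ∈ S, ∃ w ≠ s, linearCombination ℕ φ w = linearCombination ℕ φ s ∧
      m.toSyn w ≤ m.toSyn s)
    (hlead : ∀ u w, w ≠ u → linearCombination ℕ φ w = linearCombination ℕ φ u →
      m.toSyn w ≤ m.toSyn u → ∃ s ∈ S, s ≤ u) :
    initialIdeal K m (kerMonomialMap K φ) = Ideal.span ((fun s => monomial s (1 : K)) '' S) := by
  classical
  apply le_antisymm
  · refine Ideal.span_le.mpr ?_
    rintro _ ⟨f, hf, -, u, hu, humax, rfl⟩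
    obtain ⟨w, hw, hwu, hφ⟩ := exists_mem_support_ne_of_mem_kerMonomialMap hf hu
    obtain ⟨s, hs, hsu⟩ := hlead u w hwu hφ (humax w hw)
    simpa [mem_ideal_span_monomial_image, support_monomial] using ⟨s, hs, hsu⟩
  · refine Ideal.span_le.mpr ?_
    rintro _ ⟨s, hs, rfl⟩
    obtain ⟨w, hws, hφ, hle⟩ := hS s hs
    exact monomial_mem_initialIdeal_kerMonomialMap m hws hφ hle

lemma monomial_notMem_span_diff_of_isAntichain {S : Set (σ →₀ ℕ)}
    (hS : IsAntichain (· ≤ ·) S) :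
    ∀ g ∈ (fun s => monomial s (1 : K)) '' S,
      g ∉ Ideal.span (((fun s => monomial s (1 : K)) '' S) \ {g}) := by
  classical
  rintro _ ⟨s, hs, rfl⟩
  rw [← Set.image_singleton (f := fun s => monomial s (1 : K)),
    ← Set.image_sdiff (monomial_left_injective one_ne_zero), mem_ideal_span_monomial_image]
  simp only [support_monomial, one_ne_zero, if_false, Finset.mem_singleton, forall_eq,
    not_exists, not_and]
  exact fun s' hs' hle => hS hs'.1 hs hs'.2 hle

end MonomialMap

lemma exists_single_add_single_le {ι σ : Type*} [Fintype ι] [LinearOrder ι] {a : ι → σ}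
    (ha : Function.Injective a) {u : σ →₀ ℕ} (h : 2 ≤ ∑ i, u (a i)) :
    ∃ i j, i ≤ j ∧ single (a i) 1 + single (a j) 1 ≤ u := by
  classical
  obtain ⟨i, -, hi⟩ := Finset.exists_ne_zero_of_sum_ne_zero (by omega : ∑ i, u (a i) ≠ 0)
  by_cases h₂ : 2 ≤ u (a i)
  · exact ⟨i, i, le_rfl, by rwa [← single_add, single_le_iff]⟩
  obtain ⟨j, hj, hj₀⟩ : ∃ j ∈ Finset.univ.erase i, u (a j) ≠ 0 := by
    refine Finset.exists_ne_zero_of_sum_ne_zero ?_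
    have := Finset.add_sum_erase Finset.univ (fun k => u (a k)) (Finset.mem_univ i)
    omega
  have hij : a i ≠ a j := ha.ne (Finset.ne_of_mem_erase hj).symm
  have hle : single (a i) 1 + single (a j) 1 ≤ u := by
    intro x
    simp only [Finsupp.add_apply, single_apply]
    split_ifs <;> simp_all <;> omega
  rcases le_total i j with hij | hji
  exacts [⟨i, j, hij, hle⟩, ⟨j, i, hji, add_comm (single (a i) 1) _ ▸ hle⟩]

lemma eq_of_le_of_degree_le {σ : Type*} {u v : σ →₀ ℕ} (h : u ≤ v)
    (hd : degree v ≤ degree u) : u = v := by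
  obtain ⟨d, rfl⟩ := le_iff_exists_add.mp h
  rw [map_add] at hd
  rw [(degree_eq_zero_iff d).mp (by omega), add_zero]

section GraphGt

variable {K} {t : ℕ}

def gtIncidence : EVar t → GtVertex t →₀ ℕ
  | Sum.inl (Sum.inl i) => single (Sum.inl 0) 1 + single (Sum.inr i) 1
  | Sum.inl (Sum.inr j) =>
      ![single (Sum.inl 1) 1 + single (Sum.inl 4) 1, single (Sum.inl 4) 1 + single (Sum.inl 5) 1,
        single (Sum.inl 5) 1 + single (Sum.inl 1) 1] j
  | Sum.inr (Sum.inl j) =>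
      ![single (Sum.inl 0) 1 + single (Sum.inl 2) 1, single (Sum.inl 2) 1 + single (Sum.inl 3) 1,
        single (Sum.inl 3) 1 + single (Sum.inl 0) 1] j
  | Sum.inr (Sum.inr i) => single (Sum.inl 1) 1 + single (Sum.inr i) 1

lemma toricGt_eq_kerMonomialMap : toricGt K t = kerMonomialMap K (gtIncidence (t := t)) := by
  have : gtMap K t = fun e => monomial (gtIncidence e) 1 := by
    ext1 e
    rcases e with (i | j) | (j | i) <;> [skip; fin_cases j; fin_cases j; skip] <;>
      simp [gtMap, gtIncidence, X, monomial_mul]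
  rw [toricGt, kerMonomialMap, this]

def vertexDegree (u : EVar t →₀ ℕ) : GtVertex t →₀ ℕ :=
  linearCombination ℕ gtIncidence u

lemma vertexDegree_apply (u : EVar t →₀ ℕ) (p : GtVertex t) :
    vertexDegree u p = ∑ e, u e * gtIncidence e p := by
  classical
  rw [vertexDegree, linearCombination_apply, Finsupp.sum_apply, Finsupp.sum_fintype _ _ (by simp)]
  simp

lemma sum_evar {M : Type} [AddCommMonoid M] (g : EVar t → M) :
    ∑ x, g x = (∑ i, g (EVar.a i) + (g (EVar.f 0) + g (EVar.f 1) + g (EVar.f 2))) +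
      ((g (EVar.e 0) + g (EVar.e 1) + g (EVar.e 2)) + ∑ i, g (EVar.b i)) := by
  simp only [Fintype.sum_sum_type, Fin.sum_univ_three]
  rfl

open EVar in
lemma vertex_equations_of_vertexDegree_eq {u w : EVar t →₀ ℕ}
    (hvd : vertexDegree w = vertexDegree u) :
    (∀ i, w (a i) + w (b i) = u (a i) + u (b i)) ∧
    ∑ i, w (a i) + (w (e 0) + w (e 2)) = ∑ i, u (a i) + (u (e 0) + u (e 2)) ∧
    w (f 0) + w (f 2) + ∑ i, w (b i) = u (f 0) + u (f 2) + ∑ i, u (b i) ∧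
    w (e 0) + w (e 1) = u (e 0) + u (e 1) ∧ w (e 1) + w (e 2) = u (e 1) + u (e 2) ∧
    w (f 0) + w (f 1) = u (f 0) + u (f 1) ∧ w (f 1) + w (f 2) = u (f 1) + u (f 2) := by
  have h p := DFunLike.congr_fun hvd p
  simp only [vertexDegree_apply, sum_evar] at h
  refine ⟨fun i => ?_, ?_, ?_, ?_, ?_, ?_, ?_⟩ <;>
  [have h := h (.inr i); have h := h (.inl 0); have h := h (.inl 1); have h := h (.inl 2);
    have h := h (.inl 3); have h := h (.inl 4); have h := h (.inl 5)] <;>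
  simpa [gtIncidence, a, b, e, f, single_apply] using h

lemma degree_gtIncidence (x : EVar t) : degree (gtIncidence x) = 2 := by
  rcases x with (i | j) | (j | i) <;> [skip; fin_cases j; fin_cases j; skip] <;>
    simp [gtIncidence]

lemma degree_vertexDegree (u : EVar t →₀ ℕ) : degree (vertexDegree u) = 2 * degree u := by
  induction u using Finsupp.induction_linear with
  | zero => simp [vertexDegree]
  | add u v hu hv => simp_all [vertexDegree, mul_add]
  | single x n => simp [vertexDegree, degree_gtIncidence, mul_comm]

open EVar in
lemma eq_of_vertexDegree_eq_of_forall_b_eq {u w : EVar t →₀ ℕ}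
    (hvd : vertexDegree w = vertexDegree u) (hb : ∀ i, w (b i) = u (b i)) : w = u := by
  obtain ⟨hy, hx₁, hx₂, hz₁, hz₂, hw₁, hw₂⟩ := vertex_equations_of_vertexDegree_eq hvd
  have ha i : w (a i) = u (a i) := by have := hy i; have := hb i; omega
  rw [Finset.sum_congr rfl fun i _ => ha i] at hx₁
  rw [Finset.sum_congr rfl fun i _ => hb i] at hx₂
  ext ((i | j) | (j | i))
  · exact ha i
  · fin_cases j <;> simp only [Fin.zero_eta, Fin.mk_one, Fin.reduceFinMk, f] at * <;> omega
  · fin_cases j <;> simp only [Fin.zero_eta, Fin.mk_one, Fin.reduceFinMk, e] at * <;> omega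
  · exact hb i

def abExp (i j : Fin t) : EVar t →₀ ℕ :=
  single (EVar.a i) 1 + single (EVar.b j) 1

def aaExp (i j : Fin t) : EVar t →₀ ℕ :=
  single (EVar.a i) 1 + single (EVar.a j) 1 + single (EVar.f 0) 1 + single (EVar.f 2) 1 +
    single (EVar.e 1) 1

def bbExp (i j : Fin t) : EVar t →₀ ℕ :=
  single (EVar.f 1) 1 + single (EVar.e 0) 1 + single (EVar.e 2) 1 + single (EVar.b i) 1 +
    single (EVar.b j) 1

/-- `aaExp i i` is the exponent of `a_i² f₁ f₃ e₂`, so `M2Set ∪ M3Set` is indexed by `i ≤ j`. -/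
def genExps (t : ℕ) : Set (EVar t →₀ ℕ) :=
  (fun p : Fin t × Fin t => abExp p.1 p.2) '' {p | p.2 < p.1} ∪
    (fun p : Fin t × Fin t => aaExp p.1 p.2) '' {p | p.1 ≤ p.2}

lemma abExp_le {u : EVar t →₀ ℕ} {i j : Fin t} (ha : 1 ≤ u (EVar.a i))
    (hb : 1 ≤ u (EVar.b j)) : abExp i j ≤ u := by
  intro x
  rcases x with (k | k) | (k | k) <;> simp only [abExp, EVar.a, EVar.b] at * <;>
    simp [single_apply] <;> split_ifs <;> simp_all

lemma aaExp_le {u : EVar t →₀ ℕ} {i j : Fin t}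
    (ha : single (EVar.a i) 1 + single (EVar.a j) 1 ≤ u) (hf₀ : 1 ≤ u (EVar.f 0))
    (hf₂ : 1 ≤ u (EVar.f 2)) (he₁ : 1 ≤ u (EVar.e 1)) : aaExp i j ≤ u := by
  intro x
  have hax := ha x
  rcases x with (k | k) | (k | k) <;> [skip; fin_cases k; fin_cases k; skip] <;>
    simp_all [aaExp, EVar.a, EVar.e, EVar.f, single_apply]

lemma evarRank_lt_evarRank_b {x : EVar t} (hx : ∀ i, x ≠ EVar.b i) (k : Fin t) :
    evarRank t x < evarRank t (EVar.b k) := by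
  rcases x with (i | j) | (j | i) <;> simp only [evarRank, EVar.b] <;> try omega
  exact absurd rfl (hx i)

lemma exists_eq_b_of_evarRank_b_lt {i : Fin t} {y : EVar t}
    (h : evarRank t (EVar.b i) < evarRank t y) : ∃ k, y = EVar.b k ∧ i < k := by
  rcases y with (k | k) | (k | k) <;> simp only [evarRank, EVar.b] at h <;> try omega
  exact ⟨k, rfl, by omega⟩

lemma grevlexLe_of_b_lt {u w : EVar t →₀ ℕ} (hdeg : degree w = degree u) {i : Fin t}
    (hi : u (EVar.b i) < w (EVar.b i)) (hgt : ∀ k, i < k → w (EVar.b k) = u (EVar.b k)) :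
    grevlexLe t w u := by
  refine Or.inr ⟨hdeg, Or.inr ⟨EVar.b i, hi, fun y hy => ?_⟩⟩
  obtain ⟨k, rfl, hk⟩ := exists_eq_b_of_evarRank_b_lt hy
  exact hgt k hk

open EVar in
lemma exists_genExps_le_of_sum_b_lt {u w : EVar t →₀ ℕ} (hvd : vertexDegree w = vertexDegree u)
    (h : ∑ i, u (b i) < ∑ i, w (b i)) : ∃ s ∈ genExps t, s ≤ u := by
  obtain ⟨hy, hx₁, hx₂, hz₁, hz₂, hw₁, hw₂⟩ := vertex_equations_of_vertexDegree_eq hvd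
  have hab : ∑ i, w (a i) + ∑ i, w (b i) = ∑ i, u (a i) + ∑ i, u (b i) := by
    simpa only [Finset.sum_add_distrib] using Finset.sum_congr rfl fun i _ => hy i
  -- with `δ = ∑ (w - u)(b i) > 0`, the vertex equations give
  -- `(u - w)(f₁) = (u - w)(f₃) = (u - w)(e₂) = δ / 2` and `∑ (u - w)(a i) = δ`
  obtain ⟨ha, hf₀, hf₂, he₁⟩ :
      2 ≤ ∑ i, u (a i) ∧ 1 ≤ u (f 0) ∧ 1 ≤ u (f 2) ∧ 1 ≤ u (e 1) := by
    omega
  obtain ⟨i, j, hij, hle⟩ := exists_single_add_single_le (fun _ _ h => by simpa [a] using h) ha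
  exact ⟨aaExp i j, Or.inr ⟨(i, j), hij, rfl⟩, aaExp_le hle hf₀ hf₂ he₁⟩

open EVar in
lemma exists_genExps_le_of_b_lt {u w : EVar t →₀ ℕ} (hvd : vertexDegree w = vertexDegree u)
    {i : Fin t} (hi : u (b i) < w (b i)) (hgt : ∀ k, i < k → w (b k) = u (b k)) :
    ∃ s ∈ genExps t, s ≤ u := by
  by_cases hj : ∃ j < i, w (b j) < u (b j)
  · obtain ⟨j, hji, hj⟩ := hj
    have := (vertex_equations_of_vertexDegree_eq hvd).1 i
    exact ⟨abExp i j, Or.inl ⟨(i, j), hji, rfl⟩, abExp_le (by omega) (by omega)⟩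
  push Not at hj
  refine exists_genExps_le_of_sum_b_lt hvd
    (Finset.sum_lt_sum (fun k _ => ?_) ⟨i, Finset.mem_univ i, hi⟩)
  rcases lt_trichotomy k i with hk | rfl | hk
  exacts [hj k hk, hi.le, (hgt k hk).ge]

theorem exists_genExps_le_of_grevlexLe {u w : EVar t →₀ ℕ} (hne : w ≠ u)
    (hvd : vertexDegree w = vertexDegree u) (hle : grevlexLe t w u) :
    ∃ s ∈ genExps t, s ≤ u := by
  have hdeg : degree w = degree u := by
    have := congrArg degree hvd
    rw [degree_vertexDegree, degree_vertexDegree] at this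
    omega
  rcases hle with hlt | ⟨-, heq | ⟨x, hx, hxy⟩⟩
  · exact absurd hdeg (ne_of_lt hlt)
  · exact absurd heq hne
  by_cases hb : ∃ i, x = EVar.b i
  · obtain ⟨i, rfl⟩ := hb
    exact exists_genExps_le_of_b_lt hvd hx fun k hk =>
      hxy _ (by simp only [evarRank, EVar.b]; omega)
  · push Not at hb
    have := eq_of_vertexDegree_eq_of_forall_b_eq hvd fun k => hxy _ (evarRank_lt_evarRank_b hb k)
    exact absurd this hne

lemma vertexDegree_abExp (i j : Fin t) : vertexDegree (abExp i j) = vertexDegree (abExp j i) := by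
  simp only [vertexDegree, abExp, map_add, linearCombination_single, one_smul, gtIncidence,
    EVar.a, EVar.b]
  abel

lemma vertexDegree_aaExp (i j : Fin t) : vertexDegree (aaExp i j) = vertexDegree (bbExp i j) := by
  simp only [vertexDegree, aaExp, bbExp, map_add, linearCombination_single, one_smul, gtIncidence,
    EVar.a, EVar.b, EVar.e, EVar.f, Matrix.cons_val_zero, Matrix.cons_val_one,
    Matrix.cons_val_two, Matrix.head_cons, Matrix.tail_cons]
  abel

lemma exists_partner_of_mem_genExps {s : EVar t →₀ ℕ} (hs : s ∈ genExps t) :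
    ∃ w ≠ s, vertexDegree w = vertexDegree s ∧ grevlexLe t w s := by
  rcases hs with ⟨⟨i, j⟩, hji : j < i, rfl⟩ | ⟨⟨i, j⟩, hij : i ≤ j, rfl⟩
  · have hb : abExp i j (EVar.b i) < abExp j i (EVar.b i) := by
      simp [abExp, EVar.a, EVar.b, hji.ne]
    refine ⟨abExp j i, fun h => hb.ne (h ▸ rfl), vertexDegree_abExp j i,
      grevlexLe_of_b_lt (by simp [abExp]) hb fun k hk => ?_⟩
    simp [abExp, EVar.a, EVar.b, hk.ne, (hji.trans hk).ne]
  · have hb : aaExp i j (EVar.b j) < bbExp i j (EVar.b j) := by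
      simp [aaExp, bbExp, EVar.a, EVar.b, EVar.e, EVar.f, single_apply]
    refine ⟨bbExp i j, fun h => hb.ne (h ▸ rfl), (vertexDegree_aaExp i j).symm,
      grevlexLe_of_b_lt (by simp [aaExp, bbExp]) hb fun k hk => ?_⟩
    simp [aaExp, bbExp, EVar.a, EVar.b, EVar.e, EVar.f, hk.ne, (hij.trans_lt hk).ne]

lemma degree_abExp (i j : Fin t) : degree (abExp i j) = 2 := by
  simp [abExp]

lemma degree_aaExp (i j : Fin t) : degree (aaExp i j) = 5 := by
  simp [aaExp]

lemma isAntichain_genExps : IsAntichain (· ≤ ·) (genExps t) := by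
  rintro s hs s' hs' hne hle
  refine hne (eq_of_le_of_degree_le hle ?_)
  rcases hs with ⟨⟨i, j⟩, -, rfl⟩ | ⟨⟨i, j⟩, -, rfl⟩ <;>
    rcases hs' with ⟨⟨i', j'⟩, -, rfl⟩ | ⟨⟨i', j'⟩, -, rfl⟩ <;>
    simp only [degree_abExp, degree_aaExp] <;> try omega
  simpa [abExp, aaExp, EVar.a, EVar.b, EVar.e, EVar.f] using hle (EVar.b j)

lemma abExp_injective : Function.Injective fun p : Fin t × Fin t => abExp p.1 p.2 := by
  rintro ⟨i, j⟩ ⟨i', j'⟩ h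
  simpa [abExp, single_add_single_eq_single_add_single, EVar.a, EVar.b] using h

lemma aaExp_injOn : Set.InjOn (fun p : Fin t × Fin t => aaExp p.1 p.2) {p | p.1 ≤ p.2} := by
  rintro ⟨i, j⟩ (hij : i ≤ j) ⟨i', j'⟩ (hij' : i' ≤ j') h
  simp only [aaExp, add_left_inj] at h
  rcases (single_add_single_eq_single_add_single one_ne_zero one_ne_zero).mp h with
    ⟨h₁, h₂⟩ | ⟨-, h₁, h₂⟩ | ⟨h, -⟩
  · simp_all [EVar.a]
  · simp only [EVar.a, Sum.inl.injEq] at h₁ h₂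
    subst h₁ h₂
    rw [le_antisymm hij hij']
  · exact absurd h (by norm_num)

lemma ncard_genExps : (genExps t).ncard = t ^ 2 := by
  have hdisj : Disjoint ((fun p : Fin t × Fin t => abExp p.1 p.2) '' {p | p.2 < p.1})
      ((fun p : Fin t × Fin t => aaExp p.1 p.2) '' {p | p.1 ≤ p.2}) := by
    rw [Set.disjoint_left]
    rintro _ ⟨⟨i, j⟩, -, rfl⟩ ⟨⟨i', j'⟩, -, h⟩
    simpa [abExp, aaExp, EVar.a, EVar.b, EVar.e, EVar.f] using DFunLike.congr_fun h (EVar.f 0)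
  have hcompl : {p : Fin t × Fin t | p.1 ≤ p.2} = {p | p.2 < p.1}ᶜ := by
    ext p
    simp
  rw [genExps, Set.ncard_union_eq hdisj (Set.toFinite _) (Set.toFinite _),
    Set.ncard_image_of_injective _ abExp_injective, aaExp_injOn.ncard_image, hcompl,
    Set.ncard_add_ncard_compl, Nat.card_eq_fintype_card, Fintype.card_prod, Fintype.card_fin, sq]

lemma generators_eq_image_genExps :
    M1Set K t ∪ M2Set K t ∪ M3Set K t = (fun s => monomial s (1 : K)) '' genExps t := by
  have hab i j : (X (EVar.a i) * X (EVar.b j) : MvPolynomial (EVar t) K) =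
      monomial (abExp i j) 1 := by
    simp [abExp, X, monomial_mul]
  have haa i j : (X (EVar.a i) * X (EVar.a j) * X (EVar.f 0) * X (EVar.f 2) * X (EVar.e 1) :
      MvPolynomial (EVar t) K) = monomial (aaExp i j) 1 := by
    simp [aaExp, X, monomial_mul]
  ext g
  constructor
  · rintro ((⟨i, j, hji, rfl⟩ | ⟨i, j, hij, rfl⟩) | ⟨i, rfl⟩)
    · exact ⟨abExp i j, Or.inl ⟨(i, j), hji, rfl⟩, (hab i j).symm⟩
    · exact ⟨aaExp i j, Or.inr ⟨(i, j), hij.le, rfl⟩, (haa i j).symm⟩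
    · exact ⟨aaExp i i, Or.inr ⟨(i, i), le_refl i, rfl⟩, by rw [sq, haa]⟩
  · rintro ⟨_, ⟨⟨i, j⟩, hji : j < i, rfl⟩ | ⟨⟨i, j⟩, hij : i ≤ j, rfl⟩, rfl⟩
    · exact Or.inl (Or.inl ⟨i, j, hji, (hab i j).symm⟩)
    · rcases hij.lt_or_eq with hij | rfl
      · exact Or.inl (Or.inr ⟨i, j, hij, (haa i j).symm⟩)
      · exact Or.inr ⟨i, by rw [sq, haa]⟩

end GraphGt

theorem statement8_general (K : Type) [Field K] (t : ℕ)
    (m : MonomialOrder (EVar t)) (hm : IsGrevlex t m) :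
    initialIdeal K m (toricGt K t) =
      Ideal.span (M1Set K t ∪ M2Set K t ∪ M3Set K t) ∧
    (M1Set K t ∪ M2Set K t ∪ M3Set K t).ncard = t ^ 2 ∧
    ∀ g ∈ M1Set K t ∪ M2Set K t ∪ M3Set K t,
      g ∉ Ideal.span ((M1Set K t ∪ M2Set K t ∪ M3Set K t) \ {g}) := by
  rw [generators_eq_image_genExps]
  refine ⟨?_, ?_, monomial_notMem_span_diff_of_isAntichain isAntichain_genExps⟩
  · rw [toricGt_eq_kerMonomialMap]
    refine initialIdeal_kerMonomialMap_eq_span m (fun s hs => ?_) fun u w hne hvd hle =>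
      exists_genExps_le_of_grevlexLe hne hvd ((hm w u).mp hle)
    obtain ⟨w, hne, hvd, hle⟩ := exists_partner_of_mem_genExps hs
    exact ⟨w, hne, hvd, (hm w s).mpr hle⟩
  · rw [Set.ncard_image_of_injective _ (monomial_left_injective one_ne_zero), ncard_genExps]

/-- Corollary 3.6. For `t ≥ 2`, with respect to the graded
reverse lexicographic order with
`a₁ > ⋯ > a_t > f₁ > f₂ > f₃ > e₁ > e₂ > e₃ > b₁ > ⋯ > b_t`, the initial
ideal of `I_{G_t}` is generated by the monomials
`a_i b_j` (`j < i`), `a_i a_j f₁ f₃ e₂` (`i < j`) and `a_i² f₁ f₃ e₂`, and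
these `t²` monomials form a minimal generating set. -/
theorem statement8 (K : Type) [Field K] (t : ℕ) (ht : 2 ≤ t)
    (m : MonomialOrder (EVar t)) (hm : IsGrevlex t m) :
    initialIdeal K m (toricGt K t) =
      Ideal.span (M1Set K t ∪ M2Set K t ∪ M3Set K t) ∧
    (M1Set K t ∪ M2Set K t ∪ M3Set K t).ncard = t ^ 2 ∧
    ∀ g ∈ M1Set K t ∪ M2Set K t ∪ M3Set K t,
      g ∉ Ideal.span ((M1Set K t ∪ M2Set K t ∪ M3Set K t) \ {g}) :=
  statement8_general K t m hm

end ToricPaper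
end
end

section
/- Fix an integer t ≥ 2. In the polynomial ring K[E_t], the colon ideal ⟨ a_i b_j : 1 ≤ j < i ≤ t ⟩ : ⟨ a_t a_{t−1} f_1 f_3 e_2 ⟩ equals the ideal ⟨ b_1, …, b_{t−1} ⟩ generated by the variables b_1,…,b_{t−1}. -/
open MvPolynomial

noncomputable section

namespace ToricPaper

variable (K : Type) [Field K]

/-! `b_j · a_t a_{t-1} f₁ f₃ e₂` is a multiple of the generator `a_t b_j` for `j < t`. Conversely,
every generator `a_i b_j` lies in `⟨b₁, …, b_{t-1}⟩`, and membership in an ideal generated by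
variables is decided monomial by monomial, so multiplying by a monomial that involves none of
those variables cannot bring an element into it. -/

theorem mem_span_X_image_of_mul_monomial_mem {σ R : Type*} [CommSemiring R] {s : Set σ}
    {d : σ →₀ ℕ} (hd : ∀ v ∈ s, d v = 0) {r : MvPolynomial σ R}
    (h : r * monomial d 1 ∈ Ideal.span (X '' s : Set (MvPolynomial σ R))) :
    r ∈ Ideal.span (X '' s : Set (MvPolynomial σ R)) := by
  rw [mem_ideal_span_X_image] at h ⊢
  intro u hu
  have hud : u + d ∈ (r * monomial d 1).support := by
    rwa [mem_support_iff, coeff_mul_monomial, mul_one, ← mem_support_iff]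
  obtain ⟨v, hv, hvu⟩ := h (u + d) hud
  exact ⟨v, hv, by simpa [hd v hv] using hvu⟩

theorem colon_span_X_image_monomial {σ R : Type*} [CommSemiring R] {s : Set σ}
    {d : σ →₀ ℕ} (hd : ∀ v ∈ s, d v = 0) :
    Submodule.colon (Ideal.span (X '' s : Set (MvPolynomial σ R)))
      ((Ideal.span {monomial d (1 : R)} : Ideal (MvPolynomial σ R)) : Set (MvPolynomial σ R)) =
      Ideal.span (X '' s : Set (MvPolynomial σ R)) :=
  le_antisymm (fun _ hr => mem_span_X_image_of_mul_monomial_mem hd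
    (Ideal.mem_colon_span_singleton.mp hr)) Ideal.le_colon

def bInit (t : ℕ) : Set (EVar t) := EVar.b '' {j | (j : ℕ) < t - 1}

theorem span_M1Set_le (t : ℕ) :
    Ideal.span (M1Set K t) ≤ Ideal.span (X '' bInit t : Set (MvPolynomial (EVar t) K)) := by
  rw [Ideal.span_le]
  rintro _ ⟨i, j, hji, rfl⟩
  have hj : (j : ℕ) < t - 1 := by have := i.isLt; omega
  exact Ideal.mul_mem_left _ _ (Ideal.subset_span ⟨_, ⟨j, hj, rfl⟩, rfl⟩)

/-- from the proof of Theorem 3.7, Case 1. For `t ≥ 2`, in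
`K[E_t]` one has
`⟨a_i b_j : 1 ≤ j < i ≤ t⟩ : ⟨a_t a_{t-1} f₁ f₃ e₂⟩ = ⟨b₁, …, b_{t-1}⟩`. -/
theorem statement10 (K : Type) [Field K] (t : ℕ) (ht : 2 ≤ t) :
    Submodule.colon (Ideal.span (M1Set K t))
      ((Ideal.span {X (EVar.a (⟨t - 1, by omega⟩ : Fin t)) *
        X (EVar.a (⟨t - 2, by omega⟩ : Fin t)) *
        X (EVar.f 0) * X (EVar.f 2) * X (EVar.e 1)} : Ideal (MvPolynomial (EVar t) K)) :
        Set (MvPolynomial (EVar t) K))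
    = Ideal.span {g : MvPolynomial (EVar t) K | ∃ j : Fin t, (j : ℕ) < t - 1 ∧
        g = X (EVar.b j)} := by
  set last : Fin t := ⟨t - 1, by omega⟩
  set prev : Fin t := ⟨t - 2, by omega⟩
  have hgens : {g : MvPolynomial (EVar t) K | ∃ j : Fin t, (j : ℕ) < t - 1 ∧
      g = X (EVar.b j)} = X '' bInit t := by
    rw [bInit, Set.image_image]
    ext
    simp [eq_comm]
  rw [hgens]
  refine le_antisymm ?_ ?_
  · refine (Submodule.colon_mono (span_M1Set_le K t) subset_rfl).trans_eq ?_
    simp only [X, monomial_mul, mul_one]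
    exact colon_span_X_image_monomial (by
      rintro _ ⟨j, -, rfl⟩
      simp [EVar.a, EVar.b, EVar.e, EVar.f])
  · rw [Ideal.span_le]
    rintro _ ⟨_, ⟨j, hj, rfl⟩, rfl⟩
    refine Ideal.mem_colon_span_singleton.mpr ?_
    have hgen : X (EVar.a last) * X (EVar.b j) ∈ M1Set K t := ⟨last, j, hj, rfl⟩
    convert Ideal.mul_mem_right
      (X (EVar.a prev) * X (EVar.f 0) * X (EVar.f 2) * X (EVar.e 1)) _ (Ideal.subset_span hgen)
      using 1
    ring

end ToricPaper
end
end
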